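/- For every real x ≥ 4 and every positive integer n, li(x) ≤ ∑_{k=1}^{n} (k−1)!·x/log^k x + n!·√x/log^{n+1} 2 + n!·2^{n+1}·x/log^{n+1} x. -/

import Mathlib

noncomputable def li (x : ℝ) : ℝ :=
  Filter.limUnder (nhdsWithin (0:ℝ) (Set.Ioi 0))
    (fun ε => (∫ t in (0:ℝ)..(1 - ε), 1 / Real.log t) + ∫ t in (1 + ε)..x, 1 / Real.log t)

/-!
Reflecting the part `(1, 2]` of the principal value onto `[0, 1)` by `t ↦ 2 - t` gives
`li x = C + ∫₂ˣ dt / log t` with `C = ∫₀¹ (1 / log t + 1 / log (2 - t)) dt`. Since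
`1 / log t` lies between `1 / (t - 1)` and `t / (t - 1)`, the integrand of `C` lies in `[0, 2]`, so
`C ≤ 2 ≤ 2 / log 2`. Integrating `∫₂ˣ dt / log t` by parts `n` times gives
`∑ₖ (k - 1)! (x / logᵏ x - 2 / logᵏ 2) + n! ∫₂ˣ dt / logⁿ⁺¹ t`; the boundary term `2 / log 2` at
`k = 1` absorbs `C`, and the remainder is split at `√x`, using `log t ≥ log 2` below `√x` and
`log t ≥ (log x) / 2` above it.
-/

open Real MeasureTheory intervalIntegral Filter Set Topology
open scoped Nat

lemma one_lt_of_mem_uIcc {a b t : ℝ} (ha : 1 < a) (hb : 1 < b) (ht : t ∈ uIcc a b) : 1 < t :=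
  (lt_min ha hb).trans_le ht.1

lemma intervalIntegrable_one_div_log_pow {a b : ℝ} (ha : 1 < a) (hb : 1 < b) (m : ℕ) :
    IntervalIntegrable (fun t => 1 / log t ^ m) volume a b := by
  refine ContinuousOn.intervalIntegrable (continuousOn_const.div ?_ fun t ht => ?_)
  · exact (continuousOn_log.mono fun t ht => (one_pos.trans (one_lt_of_mem_uIcc ha hb ht)).ne').pow m
  · exact pow_ne_zero _ (log_pos (one_lt_of_mem_uIcc ha hb ht)).ne'

lemma hasDerivAt_div_log_pow {t : ℝ} (ht : t ≠ 0) (hlog : log t ≠ 0) (k : ℕ) :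
    HasDerivAt (fun t => t / log t ^ (k + 1))
      (1 / log t ^ (k + 1) - (k + 1) * (1 / log t ^ (k + 2))) t := by
  have hpow : HasDerivAt (fun t => log t ^ (k + 1)) ((k + 1) * log t ^ k * t⁻¹) t :=
    ((hasDerivAt_log ht).pow (k + 1)).congr_deriv (by push_cast; ring)
  refine ((hasDerivAt_id' t).div hpow (pow_ne_zero _ hlog)).congr_deriv ?_
  field_simp
  ring

lemma integral_one_div_log_pow_succ {a b : ℝ} (ha : 1 < a) (hb : 1 < b) (k : ℕ) :
    ∫ t in a..b, 1 / log t ^ (k + 1) =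
      b / log b ^ (k + 1) - a / log a ^ (k + 1) + (k + 1) * ∫ t in a..b, 1 / log t ^ (k + 2) := by
  have hint := intervalIntegrable_one_div_log_pow ha hb
  have hftc := integral_eq_sub_of_hasDerivAt
    (fun t ht => hasDerivAt_div_log_pow (one_pos.trans (one_lt_of_mem_uIcc ha hb ht)).ne'
      (log_pos (one_lt_of_mem_uIcc ha hb ht)).ne' k)
    ((hint _).sub ((hint _).const_mul _))
  rw [integral_sub (hint _) ((hint _).const_mul _), intervalIntegral.integral_const_mul] at hftc
  linarith

lemma integral_one_div_log_eq_sum {a b : ℝ} (ha : 1 < a) (hb : 1 < b) (n : ℕ) :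
    ∫ t in a..b, 1 / log t =
      (∑ k ∈ Finset.Icc 1 n, ((k - 1)! : ℝ) * b / log b ^ k) -
        (∑ k ∈ Finset.Icc 1 n, ((k - 1)! : ℝ) * a / log a ^ k) +
        (n ! : ℝ) * ∫ t in a..b, 1 / log t ^ (n + 1) := by
  induction n with
  | zero => simp
  | succ n ih =>
    rw [ih, integral_one_div_log_pow_succ ha hb, Finset.sum_Icc_succ_top (by omega),
      Finset.sum_Icc_succ_top (by omega), Nat.add_sub_cancel, Nat.factorial_succ]
    push_cast
    ring

lemma integral_one_div_log_pow_le {a b : ℝ} (ha : 1 < a) (hab : a ≤ b) (m : ℕ) :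
    ∫ t in a..b, 1 / log t ^ m ≤ (b - a) / log a ^ m := by
  have hloga := log_pos ha
  calc ∫ t in a..b, 1 / log t ^ m
      ≤ ∫ _ in a..b, 1 / log a ^ m :=
        integral_mono_on hab (intervalIntegrable_one_div_log_pow ha (ha.trans_le hab) m)
          intervalIntegrable_const fun t ht => one_div_le_one_div_of_le (by positivity)
            (pow_le_pow_left₀ hloga.le (log_le_log (by linarith) ht.1) m)
    _ = (b - a) / log a ^ m := by rw [intervalIntegral.integral_const, smul_eq_mul, mul_one_div]

lemma integral_two_one_div_log_pow_le {x : ℝ} (hx : 4 ≤ x) (m : ℕ) :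
    ∫ t in 2..x, 1 / log t ^ m ≤ √x / log 2 ^ m + 2 ^ m * x / log x ^ m := by
  have hsqrt2 : 2 ≤ √x := le_sqrt_of_sq_le (by linarith)
  have hsqrtx : √x ≤ x := (sqrt_le_left (by linarith)).mpr (by nlinarith)
  rw [← integral_add_adjacent_intervals
    (intervalIntegrable_one_div_log_pow (b := √x) one_lt_two (by linarith) m)
    (intervalIntegrable_one_div_log_pow (b := x) (by linarith) (by linarith) m)]
  have hlow := integral_one_div_log_pow_le one_lt_two hsqrt2 m
  have hhigh := integral_one_div_log_pow_le (by linarith) hsqrtx m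
  rw [log_sqrt (by linarith), div_pow, div_div_eq_mul_div] at hhigh
  have hlow' : (√x - 2) / log 2 ^ m ≤ √x / log 2 ^ m := by gcongr; linarith
  have hhigh' : (x - √x) * 2 ^ m / log x ^ m ≤ 2 ^ m * x / log x ^ m := by
    have hlogx : 0 < log x := log_pos (by linarith)
    rw [mul_comm]; gcongr; linarith [sqrt_nonneg x]
  linarith

lemma one_div_log_mem_Icc {x : ℝ} (h0 : 0 < x) (h1 : x ≠ 1) :
    1 / log x ∈ Icc (1 / (x - 1)) (x / (x - 1)) := by
  have hsign : 0 < (x - 1) * log x := by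
    rcases h1.lt_or_gt with h | h
    · exact mul_pos_of_neg_of_neg (by linarith) (log_neg h0 h)
    · exact mul_pos (by linarith) (log_pos h)
  have hd : x - 1 ≠ 0 := sub_ne_zero.mpr h1
  have hl : log x ≠ 0 := right_ne_zero_of_mul hsign.ne'
  have hupper : x - 1 ≤ x * log x := by
    have := mul_le_mul_of_nonneg_left (one_sub_inv_le_log_of_pos h0) h0.le
    rwa [mul_sub, mul_one, mul_inv_cancel₀ h0.ne'] at this
  constructor
  · rw [← sub_nonneg, show 1 / log x - 1 / (x - 1) = (x - 1 - log x) / ((x - 1) * log x) by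
      field_simp]
    exact div_nonneg (by linarith [log_le_sub_one_of_pos h0]) hsign.le
  · rw [← sub_nonneg, show x / (x - 1) - 1 / log x = (x * log x - (x - 1)) / ((x - 1) * log x) by
      field_simp]
    exact div_nonneg (by linarith) hsign.le

/-- Folding `(1, 2]` onto `[0, 1)` by `t ↦ 2 - t`; the poles `1 / (t - 1)` and `1 / (1 - t)` of the
two terms cancel. -/
noncomputable def foldedInvLog (t : ℝ) : ℝ := 1 / log t + 1 / log (2 - t)

lemma abs_foldedInvLog_le_two {t : ℝ} (h0 : 0 < t) (h1 : t ≤ 1) : |foldedInvLog t| ≤ 2 := by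
  rcases h1.eq_or_lt with rfl | h1
  · norm_num [foldedInvLog]
  obtain ⟨hlower₁, hupper₁⟩ := one_div_log_mem_Icc h0 h1.ne
  obtain ⟨hlower₂, hupper₂⟩ := one_div_log_mem_Icc (x := 2 - t) (by linarith) (by linarith)
  have ht : t - 1 ≠ 0 := by linarith
  have ht' : 2 - t - 1 ≠ 0 := by linarith
  have hlower : 1 / (t - 1) + 1 / (2 - t - 1) = 0 := by field_simp; ring
  have hupper : t / (t - 1) + (2 - t) / (2 - t - 1) = 2 := by field_simp; ring
  rw [abs_le, foldedInvLog]
  constructor <;> linarith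

lemma intervalIntegrable_foldedInvLog : IntervalIntegrable foldedInvLog volume 0 1 := by
  rw [intervalIntegrable_iff_integrableOn_Ioc_of_le zero_le_one]
  refine Measure.integrableOn_of_bounded (M := 2) measure_Ioc_lt_top.ne
    (by unfold foldedInvLog; fun_prop : Measurable foldedInvLog).aestronglyMeasurable
    ((ae_restrict_iff' measurableSet_Ioc).2 (ae_of_all _ fun t ht => ?_))
  exact (norm_eq_abs _).trans_le (abs_foldedInvLog_le_two ht.1 ht.2)

lemma integral_foldedInvLog_le_two : ∫ t in 0..1, foldedInvLog t ≤ 2 := by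
  have := norm_integral_le_of_norm_le_const (a := 0) (b := 1) (f := foldedInvLog) (C := 2)
    fun t ht => by
      rw [uIoc_of_le zero_le_one] at ht
      exact (norm_eq_abs _).trans_le (abs_foldedInvLog_le_two ht.1 ht.2)
  norm_num at this
  linarith [le_abs_self (∫ t in 0..1, foldedInvLog t)]

lemma intervalIntegrable_one_div_log_of_lt_one {b : ℝ} (hb0 : 0 < b) (hb1 : b < 1) :
    IntervalIntegrable (fun t => 1 / log t) volume 0 b := by
  rw [intervalIntegrable_iff_integrableOn_Ioc_of_le hb0.le]
  refine Measure.integrableOn_of_bounded (M := -(1 / log b)) measure_Ioc_lt_top.ne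
    (by fun_prop : Measurable fun t => 1 / log t).aestronglyMeasurable
    ((ae_restrict_iff' measurableSet_Ioc).2 (ae_of_all _ fun t ht => ?_))
  have hle : log t ≤ log b := log_le_log ht.1 ht.2
  have hlogb : log b < 0 := log_neg hb0 hb1
  rw [norm_eq_abs, abs_of_neg (one_div_neg.2 (hle.trans_lt hlogb)), neg_le_neg_iff]
  exact one_div_le_one_div_of_neg_of_le hlogb hle

lemma li_eq_integral_foldedInvLog_add {x : ℝ} (hx : 1 < x) :
    li x = (∫ t in 0..1, foldedInvLog t) + ∫ t in 2..x, 1 / log t := by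
  refine Tendsto.limUnder_eq ?_
  have hmaps : Tendsto (fun ε : ℝ => 1 - ε) (𝓝[>] 0) (𝓝[uIcc 0 1] 1) := by
    refine tendsto_nhdsWithin_iff.2 ⟨?_, ?_⟩
    · exact ((continuous_sub_left 1).tendsto' 0 1 (sub_zero 1)).mono_left nhdsWithin_le_nhds
    · filter_upwards [Ioo_mem_nhdsGT one_pos] with ε hε
      rw [uIcc_of_le zero_le_one]
      exact ⟨by linarith [hε.2], by linarith [hε.1]⟩
  have hprim := ((continuousOn_primitive_interval' intervalIntegrable_foldedInvLog
    left_mem_uIcc) 1 right_mem_uIcc).tendsto.comp hmaps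
  refine (hprim.add_const _).congr' ?_
  filter_upwards [Ioo_mem_nhdsGT one_pos] with ε ⟨hε0, hε1⟩
  have hint := intervalIntegrable_one_div_log_pow (a := 1 + ε) (b := 2) (by linarith) one_lt_two 1
  simp only [pow_one] at hint
  have hreflect : ∫ t in 0..(1 - ε), 1 / log (2 - t) = ∫ t in (1 + ε)..2, 1 / log t := by
    rw [integral_comp_sub_left (fun t => 1 / log t)]
    ring_nf
  have hint' : IntervalIntegrable (fun t => 1 / log (2 - t)) volume 0 (1 - ε) := by
    convert (hint.comp_sub_left 2).symm using 1 <;> ring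
  have hsplit := integral_add_adjacent_intervals hint
    (by simpa using intervalIntegrable_one_div_log_pow one_lt_two hx 1)
  simp only [Function.comp_apply, foldedInvLog]
  rw [integral_add (intervalIntegrable_one_div_log_of_lt_one (by linarith) (by linarith)) hint',
    hreflect, ← hsplit]
  ring

lemma two_le_sum_factorial_mul_two_div_log_two_pow {n : ℕ} (hn : 0 < n) :
    2 ≤ ∑ k ∈ Finset.Icc 1 n, ((k - 1)! : ℝ) * 2 / log 2 ^ k := by
  have hlog2 := log_pos one_lt_two
  calc (2 : ℝ) ≤ 2 / log 2 := by rw [le_div_iff₀ hlog2]; linarith [log_two_lt_d9]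
    _ = ((1 - 1)! : ℝ) * 2 / log 2 ^ 1 := by simp
    _ ≤ ∑ k ∈ Finset.Icc 1 n, ((k - 1)! : ℝ) * 2 / log 2 ^ k :=
      Finset.single_le_sum (f := fun k => ((k - 1)! : ℝ) * 2 / log 2 ^ k)
        (fun k _ => by positivity) (Finset.mem_Icc.2 ⟨le_rfl, hn⟩)

theorem li_le_sum (n : ℕ) (hn : 0 < n) (x : ℝ) (hx : 4 ≤ x) :
    li x ≤
      (∑ k ∈ Finset.Icc 1 n, (Nat.factorial (k - 1) : ℝ) * x / (Real.log x) ^ k) +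
        (Nat.factorial n : ℝ) * Real.sqrt x / (Real.log 2) ^ (n + 1) +
        (Nat.factorial n : ℝ) * 2 ^ (n + 1) * x / (Real.log x) ^ (n + 1) := by
  have hremainder := mul_le_mul_of_nonneg_left (integral_two_one_div_log_pow_le hx (n + 1))
    (Nat.cast_nonneg (n !) : (0 : ℝ) ≤ n !)
  rw [mul_add, ← mul_div_assoc, ← mul_div_assoc, ← mul_assoc] at hremainder
  rw [li_eq_integral_foldedInvLog_add (by linarith),
    integral_one_div_log_eq_sum one_lt_two (by linarith) n]
  linarith [integral_foldedInvLog_le_two, two_le_sum_factorial_mul_two_div_log_two_pow hn]
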